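/- With j₁(u,v) = 16v(vu²+216u²-126vu-972u+12v²+405v)³/((v-27)³(4v²+27v+4u³-18vu-vu²)²) and j₂(u,v) = -256(u²-3v)³/(v(4v²+27v+4u³-18vu-vu²)), if j₁(u,v) = j₂(u,v) at a point (u,v) where all denominators are nonzero, then either 8v³ + 27v² - 54uv² - u²v² + 108u²v + 4u³v - 108u³ = 0 or 324v⁴u² - 5832v⁴u + 37908v⁴ - 314928v³u - 81v³u⁴ + 255879v³ + 30618v³u² - 864v³u³ - 6377292uv² + 8503056v² - 324u⁵v² + 2125764u²v² - 215784u³v² + 14580u⁴v² + 16u⁶v² + 78732u³v + 8748u⁵v - 864u⁶v - 157464u⁴v + 11664u⁶ = 0. -/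
import Mathlib

/-- If the j-invariants `j₁(u,v)` and `j₂(u,v)` of the two degree 3 elliptic
subfields coincide at a point `(u,v)` where all denominators are nonzero, then
`(u,v)` satisfies one of the two displayed polynomial equations. -/
theorem j1_eq_j2_implies {k : Type*} [Field k] [CharZero k] (u v : k)
    (hv : v ≠ 0) (hv27 : v ≠ 27)
    (hD : 4 * v ^ 2 + 27 * v + 4 * u ^ 3 - 18 * v * u - v * u ^ 2 ≠ 0)
    (hj : 16 * v * (v * u ^ 2 + 216 * u ^ 2 - 126 * v * u - 972 * u + 12 * v ^ 2 +
          405 * v) ^ 3 /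
        ((v - 27) ^ 3 * (4 * v ^ 2 + 27 * v + 4 * u ^ 3 - 18 * v * u - v * u ^ 2) ^ 2) =
      -256 * (u ^ 2 - 3 * v) ^ 3 /
        (v * (4 * v ^ 2 + 27 * v + 4 * u ^ 3 - 18 * v * u - v * u ^ 2))) :
    8 * v ^ 3 + 27 * v ^ 2 - 54 * u * v ^ 2 - u ^ 2 * v ^ 2 + 108 * u ^ 2 * v +
        4 * u ^ 3 * v - 108 * u ^ 3 = 0 ∨
      324 * v ^ 4 * u ^ 2 - 5832 * v ^ 4 * u + 37908 * v ^ 4 - 314928 * v ^ 3 * u -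
        81 * v ^ 3 * u ^ 4 + 255879 * v ^ 3 + 30618 * v ^ 3 * u ^ 2 -
        864 * v ^ 3 * u ^ 3 - 6377292 * u * v ^ 2 + 8503056 * v ^ 2 -
        324 * u ^ 5 * v ^ 2 + 2125764 * u ^ 2 * v ^ 2 - 215784 * u ^ 3 * v ^ 2 +
        14580 * u ^ 4 * v ^ 2 + 16 * u ^ 6 * v ^ 2 + 78732 * u ^ 3 * v +
        8748 * u ^ 5 * v - 864 * u ^ 6 * v - 157464 * u ^ 4 * v + 11664 * u ^ 6 = 0 := by
  have hv27' : v - 27 ≠ 0 := sub_ne_zero.mpr hv27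
  have hd1 : (v - 27) ^ 3 * (4 * v ^ 2 + 27 * v + 4 * u ^ 3 - 18 * v * u - v * u ^ 2) ^ 2 ≠ 0 :=
    mul_ne_zero (pow_ne_zero _ hv27') (pow_ne_zero _ hD)
  have hd2 : v * (4 * v ^ 2 + 27 * v + 4 * u ^ 3 - 18 * v * u - v * u ^ 2) ≠ 0 :=
    mul_ne_zero hv hD
  rw [div_eq_div_iff hd1 hd2] at hj
  have key : (16 : k) * (4 * v ^ 2 + 27 * v + 4 * u ^ 3 - 18 * v * u - v * u ^ 2) *
      ((8 * v ^ 3 + 27 * v ^ 2 - 54 * u * v ^ 2 - u ^ 2 * v ^ 2 + 108 * u ^ 2 * v +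
        4 * u ^ 3 * v - 108 * u ^ 3) *
      (324 * v ^ 4 * u ^ 2 - 5832 * v ^ 4 * u + 37908 * v ^ 4 - 314928 * v ^ 3 * u -
        81 * v ^ 3 * u ^ 4 + 255879 * v ^ 3 + 30618 * v ^ 3 * u ^ 2 -
        864 * v ^ 3 * u ^ 3 - 6377292 * u * v ^ 2 + 8503056 * v ^ 2 -
        324 * u ^ 5 * v ^ 2 + 2125764 * u ^ 2 * v ^ 2 - 215784 * u ^ 3 * v ^ 2 +
        14580 * u ^ 4 * v ^ 2 + 16 * u ^ 6 * v ^ 2 + 78732 * u ^ 3 * v +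
        8748 * u ^ 5 * v - 864 * u ^ 6 * v - 157464 * u ^ 4 * v + 11664 * u ^ 6)) = 0 := by
    rw [← sub_eq_zero] at hj
    rw [← hj]; ring
  have h16 : (16 : k) ≠ 0 := by norm_num
  have := (mul_eq_zero.mp key).resolve_left (mul_ne_zero h16 hD)
  exact mul_eq_zero.mp this
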